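/- Let (V,H) be a finite-dimensional complex Hermitian space, ι : W ↪ V injective linear, and Φ : W × V → ℂ sesquilinear; form the extended Hermitian form G = [[H, Φ*],[Φ, 0]] on V ⊕ W. Assume H is negative definite on ιW. Then: H is positive semidefinite on W^⊥_Φ if and only if (G is positive semidefinite on (ιW)^⊥_G and Φ restricted to W × ιW is nondegenerate). Likewise, H is positive definite on W^⊥_Φ if and only if G is positive definite on (ιW)^⊥_G. -/

import Mathlib

/-!
If `H ≥ 0` on `W^⊥_Φ`, then `W^⊥_Φ ∩ ιW = 0` because `H < 0` on `ιW`; as `W^⊥_Φ` has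
codimension at most `dim W`, this gives `V = W^⊥_Φ ⊕ ιW`. For `x = (v₀ + ι u, w)` with
`v₀ ∈ W^⊥_Φ` and `x ⊥_G ιW`, orthogonality forces `Φ(w, ι u) = -H(v₀ + ι u, ι u)`, whence
`G(x, x) = H(v₀, v₀) - H(ι u, ι u)`, a sum of two nonnegative terms.
Conversely, when `Φ` is nondegenerate on `W × ιW`, every `v ∈ W^⊥_Φ` has a partner `w` solving
`Φ(w, ι ·) = -H(v, ι ·)`; then `(v, w) ⊥_G ιW` and `G((v, w), (v, w)) = H(v, v)`.
Nondegeneracy of the square pairing `W × ιW` on one side implies it on the other.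
-/

open Module ComplexConjugate

namespace LinearMap

section Field

variable {K V W : Type*} [Field K] {σ : K →+* K} [AddCommGroup V] [Module K V]
  [AddCommGroup W] [Module K W]

theorem mem_ker_flip {B : W →ₛₗ[σ] V →ₗ[K] K} {v : V} : v ∈ ker B.flip ↔ ∀ w, B w v = 0 := by
  simp [LinearMap.ext_iff]

variable [FiniteDimensional K V] [FiniteDimensional K W]

theorem finrank_le_finrank_ker_flip_add (B : W →ₛₗ[σ] V →ₗ[K] K) :
    finrank K V ≤ finrank K (ker B.flip) + finrank K W := by
  let b := finBasis K W
  let T : V →ₗ[K] Fin (finrank K W) → K := LinearMap.pi fun i => B (b i)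
  have hker : ker T = ker B.flip := by
    ext v
    simp only [mem_ker, T, funext_iff, pi_apply, Pi.zero_apply]
    exact ⟨fun h => b.ext fun i => by simpa using h i, fun h i => by simp [← flip_apply, h]⟩
  have hrank := finrank_range_add_finrank_ker T
  have hrange := (range T).finrank_le
  rw [hker] at hrank
  rw [finrank_fin_fun] at hrange
  omega

theorem ker_flip_sup_range_eq_top {B : W →ₛₗ[σ] V →ₗ[K] K} {ι : W →ₗ[K] V}
    (hι : Function.Injective ι) (hB : (B.compl₂ ι).SeparatingRight) :
    ker B.flip ⊔ range ι = ⊤ := by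
  refine Submodule.eq_top_of_disjoint _ _ ?_ ?_
  · rw [finrank_range_of_inj hι]
    exact finrank_le_finrank_ker_flip_add B
  · rw [Submodule.disjoint_def]
    rintro _ hv ⟨y, rfl⟩
    rw [hB y fun w => mem_ker_flip.mp hv w, map_zero]

end Field

variable {W U : Type*} [AddCommGroup W] [Module ℂ W] [AddCommGroup U] [Module ℂ U]

def conjFlip (B : W →ₗ⋆[ℂ] U →ₗ[ℂ] ℂ) : U →ₗ⋆[ℂ] W →ₗ[ℂ] ℂ :=
  mk₂'ₛₗ (starRingEnd ℂ) (RingHom.id ℂ) (fun u w => conj (B w u)) (by simp) (by simp)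
    (by simp) (by simp)

@[simp]
theorem conjFlip_apply (B : W →ₗ⋆[ℂ] U →ₗ[ℂ] ℂ) (u : U) (w : W) :
    conjFlip B u w = conj (B w u) := rfl

theorem separatingLeft_conjFlip_iff {B : W →ₗ⋆[ℂ] U →ₗ[ℂ] ℂ} :
    (conjFlip B).SeparatingLeft ↔ B.SeparatingRight := by
  simp [SeparatingLeft, SeparatingRight]

theorem separatingRight_conjFlip_iff {B : W →ₗ⋆[ℂ] U →ₗ[ℂ] ℂ} :
    (conjFlip B).SeparatingRight ↔ B.SeparatingLeft := by
  simp [SeparatingLeft, SeparatingRight]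

/-- A conjugate-linear map is `ℝ`-linear, so real rank–nullity applies to it. -/
def toRealLinearMap {X : Type*} [AddCommGroup X] [Module ℂ X] (f : W →ₗ⋆[ℂ] X) :
    W →ₗ[ℝ] X where
  toFun := f
  map_add' := map_add f
  map_smul' r w := by simp [← Complex.coe_smul]

variable [FiniteDimensional ℂ W] [FiniteDimensional ℂ U]

theorem surjective_of_separatingLeft (hdim : finrank ℂ W = finrank ℂ U)
    {B : W →ₗ⋆[ℂ] U →ₗ[ℂ] ℂ} (hB : B.SeparatingLeft) : Function.Surjective B := by
  have hinj : Function.Injective (toRealLinearMap B) :=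
    show Function.Injective B from ker_eq_bot.mp (separatingLeft_iff_ker_eq_bot.mp hB)
  refine (injective_iff_surjective_of_finrank_eq_finrank ?_).mp hinj
  rw [finrank_real_of_complex, finrank_real_of_complex, Subspace.dual_finrank_eq, hdim]

theorem SeparatingLeft.separatingRight (hdim : finrank ℂ W = finrank ℂ U)
    {B : W →ₗ⋆[ℂ] U →ₗ[ℂ] ℂ} (hB : B.SeparatingLeft) : B.SeparatingRight := fun u hu =>
  (forall_dual_apply_eq_zero_iff ℂ u).mp fun f => by
    obtain ⟨w, rfl⟩ := surjective_of_separatingLeft hdim hB f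
    exact hu w

theorem SeparatingRight.separatingLeft (hdim : finrank ℂ W = finrank ℂ U)
    {B : W →ₗ⋆[ℂ] U →ₗ[ℂ] ℂ} (hB : B.SeparatingRight) : B.SeparatingLeft :=
  separatingRight_conjFlip_iff.mp <|
    (separatingLeft_conjFlip_iff.mpr hB).separatingRight hdim.symm

end LinearMap

open LinearMap

section ExtendedForm

variable {V W : Type*} [AddCommGroup V] [Module ℂ V] [AddCommGroup W] [Module ℂ W]
  {H : V →ₗ⋆[ℂ] V →ₗ[ℂ] ℂ} {Φ : W →ₗ⋆[ℂ] V →ₗ[ℂ] ℂ} {ι : W →ₗ[ℂ] V}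

def extendedForm (H : V →ₗ⋆[ℂ] V →ₗ[ℂ] ℂ) (Φ : W →ₗ⋆[ℂ] V →ₗ[ℂ] ℂ) (x y : V × W) : ℂ :=
  H x.1 y.1 + Φ x.2 y.1 + conj (Φ y.2 x.1)

theorem extendedForm_orthogonal_iff (hH : H.IsSymm) (x : V × W) :
    (∀ w, extendedForm H Φ (ι w, 0) x = 0) ↔ ∀ w, Φ x.2 (ι w) = -H x.1 (ι w) := by
  refine forall_congr' fun w => ?_
  simp only [extendedForm, map_zero, LinearMap.zero_apply, add_zero]
  rw [← hH.eq, ← map_add, map_eq_zero, add_eq_zero_iff_eq_neg']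

theorem extendedForm_self_of_orthogonal (hH : H.IsSymm) {v₀ : V} (hv₀ : ∀ w, Φ w v₀ = 0)
    (u : W) {w : W} (horth : ∀ y, extendedForm H Φ (ι y, 0) (v₀ + ι u, w) = 0) :
    extendedForm H Φ (v₀ + ι u, w) (v₀ + ι u, w) = H v₀ v₀ - H (ι u) (ι u) := by
  have hΦ : Φ w (v₀ + ι u) = -H (v₀ + ι u) (ι u) := by
    rw [map_add, hv₀ w, zero_add]
    exact (extendedForm_orthogonal_iff hH _).mp horth u
  rw [extendedForm, hΦ, map_neg, hH.eq]
  simp only [map_add, LinearMap.add_apply]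
  ring

theorem separatingRight_compl₂_of_nonneg (hneg : ∀ y ≠ 0, (H (ι y) (ι y)).re < 0)
    (hpos : ∀ v, (∀ w, Φ w v = 0) → 0 ≤ (H v v).re) : (Φ.compl₂ ι).SeparatingRight :=
  fun y hy => by
    by_contra hy0
    exact (hpos (ι y) hy).not_gt (hneg y hy0)

theorem separatingLeft_compl₂_of_extendedForm_pos
    (hG : ∀ x, (∀ y, extendedForm H Φ (ι y, 0) x = 0) → x ≠ 0 → 0 < (extendedForm H Φ x x).re) :
    (Φ.compl₂ ι).SeparatingLeft := fun w hw => by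
  by_contra hw0
  have := hG (0, w) (fun y => by simpa [extendedForm] using hw y) (by simp [hw0])
  simp [extendedForm] at this

variable [FiniteDimensional ℂ W]

theorem exists_orthogonal_extendedForm_self_eq (hH : H.IsSymm)
    (hsep : (Φ.compl₂ ι).SeparatingLeft) {v : V} (hv : ∀ w, Φ w v = 0) :
    ∃ w, (∀ y, extendedForm H Φ (ι y, 0) (v, w) = 0) ∧ extendedForm H Φ (v, w) (v, w) = H v v := by
  obtain ⟨w, hw⟩ := surjective_of_separatingLeft rfl hsep (-(H v).comp ι)
  refine ⟨w, (extendedForm_orthogonal_iff hH _).mpr fun y => ?_, by simp [extendedForm, hv w]⟩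
  simpa using LinearMap.congr_fun hw y

variable [FiniteDimensional ℂ V]

theorem exists_extendedForm_self_eq (hH : H.IsSymm) (hι : Function.Injective ι)
    (hneg : ∀ y ≠ 0, (H (ι y) (ι y)).re < 0) (hpos : ∀ v, (∀ w, Φ w v = 0) → 0 ≤ (H v v).re)
    {x : V × W} (horth : ∀ y, extendedForm H Φ (ι y, 0) x = 0) :
    ∃ v₀, (∀ w, Φ w v₀ = 0) ∧ ∃ u, x.1 = v₀ + ι u ∧
      extendedForm H Φ x x = H v₀ v₀ - H (ι u) (ι u) := by
  have hx : x.1 ∈ ker Φ.flip ⊔ range ι := by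
    rw [ker_flip_sup_range_eq_top hι (separatingRight_compl₂_of_nonneg hneg hpos)]
    exact Submodule.mem_top
  obtain ⟨v₀, hv₀, _, ⟨u, rfl⟩, hx1⟩ := Submodule.mem_sup.mp hx
  obtain ⟨x1, w⟩ := x
  subst hx1
  rw [mem_ker_flip] at hv₀
  exact ⟨v₀, hv₀, u, rfl, extendedForm_self_of_orthogonal hH hv₀ u horth⟩

theorem extendedForm_nonneg_of_nonneg (hH : H.IsSymm) (hι : Function.Injective ι)
    (hneg : ∀ y ≠ 0, (H (ι y) (ι y)).re < 0) (hpos : ∀ v, (∀ w, Φ w v = 0) → 0 ≤ (H v v).re)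
    (x : V × W) (horth : ∀ y, extendedForm H Φ (ι y, 0) x = 0) :
    0 ≤ (extendedForm H Φ x x).re := by
  obtain ⟨v₀, hv₀, u, -, hx⟩ := exists_extendedForm_self_eq hH hι hneg hpos horth
  rw [hx, Complex.sub_re]
  rcases eq_or_ne u 0 with rfl | hu
  · simpa using hpos v₀ hv₀
  · linarith [hpos v₀ hv₀, hneg u hu]

theorem extendedForm_pos_of_pos (hH : H.IsSymm) (hι : Function.Injective ι)
    (hneg : ∀ y ≠ 0, (H (ι y) (ι y)).re < 0)
    (hpos : ∀ v, (∀ w, Φ w v = 0) → v ≠ 0 → 0 < (H v v).re)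
    (x : V × W) (horth : ∀ y, extendedForm H Φ (ι y, 0) x = 0) (hx0 : x ≠ 0) :
    0 < (extendedForm H Φ x x).re := by
  have hnonneg : ∀ v, (∀ w, Φ w v = 0) → 0 ≤ (H v v).re := fun v hv => by
    rcases eq_or_ne v 0 with rfl | hv0
    · simp
    · exact (hpos v hv hv0).le
  obtain ⟨v₀, hv₀, u, hx1, hx⟩ := exists_extendedForm_self_eq hH hι hneg hnonneg horth
  rw [hx, Complex.sub_re]
  rcases eq_or_ne u 0 with rfl | hu
  · rcases eq_or_ne v₀ 0 with rfl | hv0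
    · refine absurd ?_ hx0
      have hsep := (separatingRight_compl₂_of_nonneg hneg hnonneg).separatingLeft rfl
      obtain ⟨x1, w⟩ := x
      simp only [map_zero, add_zero] at hx1
      subst hx1
      have hw : w = 0 := hsep w fun y => by
        simpa using (extendedForm_orthogonal_iff hH _).mp horth y
      rw [hw, Prod.mk_zero_zero]
    · simpa using hpos v₀ hv₀ hv0
  · linarith [hnonneg v₀ hv₀, hneg u hu]

end ExtendedForm

/-- Lemma `l.block`, equivalences (b)⇔(c) and (b₊)⇔(c₊): with
`G = [[H, Φ*],[Φ, 0]]` on `V ⊕ W` and `H` negative definite on `ιW`: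
`H` is positive semidefinite on `W^⊥_Φ` iff `G` is positive semidefinite on `(ιW)^⊥_G`
and `Φ|_{W × ιW}` is nondegenerate; and `H` is positive definite on `W^⊥_Φ` iff `G` is
positive definite on `(ιW)^⊥_G`. -/
theorem stmt_4 {V W : Type*} [AddCommGroup V] [Module ℂ V] [FiniteDimensional ℂ V]
    [AddCommGroup W] [Module ℂ W] [FiniteDimensional ℂ W]
    (H : V →ₗ⋆[ℂ] V →ₗ[ℂ] ℂ) (hHerm : H.IsSymm)
    (ι : W →ₗ[ℂ] V) (hι : Function.Injective ι)
    (Φ : W →ₗ⋆[ℂ] V →ₗ[ℂ] ℂ)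
    (G : V × W → V × W → ℂ)
    (hG : ∀ x y : V × W, G x y = H x.1 y.1 + Φ x.2 y.1 + (starRingEnd ℂ) (Φ y.2 x.1))
    (hnegdef : ∀ x : W, x ≠ 0 → (H (ι x) (ι x)).re < 0) :
    ((∀ v : V, (∀ w : W, Φ w v = 0) → 0 ≤ (H v v).re) ↔
      ((∀ x : V × W, (∀ w : W, G (ι w, 0) x = 0) → 0 ≤ (G x x).re) ∧
        (∀ w : W, (∀ y : W, Φ w (ι y) = 0) → w = 0) ∧
        (∀ y : W, (∀ w : W, Φ w (ι y) = 0) → y = 0))) ∧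
    ((∀ v : V, (∀ w : W, Φ w v = 0) → v ≠ 0 → 0 < (H v v).re) ↔
      (∀ x : V × W, (∀ w : W, G (ι w, 0) x = 0) → x ≠ 0 → 0 < (G x x).re)) := by
  obtain rfl : G = extendedForm H Φ := funext₂ hG
  have hsepR := fun hb => separatingRight_compl₂_of_nonneg (Φ := Φ) hnegdef hb
  refine ⟨⟨fun hb => ⟨extendedForm_nonneg_of_nonneg hHerm hι hnegdef hb,
      (hsepR hb).separatingLeft rfl, hsepR hb⟩, fun ⟨hc, hsepL, _⟩ v hv => ?_⟩,
    ⟨extendedForm_pos_of_pos hHerm hι hnegdef, fun hc v hv hv0 => ?_⟩⟩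
  · obtain ⟨w, horth, hGv⟩ := exists_orthogonal_extendedForm_self_eq hHerm hsepL hv
    simpa [hGv] using hc _ horth
  · obtain ⟨w, horth, hGv⟩ :=
      exists_orthogonal_extendedForm_self_eq hHerm (separatingLeft_compl₂_of_extendedForm_pos hc) hv
    simpa [hGv] using hc _ horth (by simp [hv0])
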